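/- The bound 6n−17 in the conditional edge-fault-tolerant strong Menger edge connectivity of BS_n is sharp: for n ≥ 4 there exists an edge set F_e of BS_n with |F_e| = 6n − 16 and δ(BS_n − F_e) ≥ 2, and vertices u, v with d_{BS_n−F_e}(u) = d_{BS_n−F_e}(v) = 2n−3, such that BS_n − F_e contains at most 2n − 4 edge-disjoint (u,v)-paths. -/

import Mathlib

open SimpleGraph

/-- Adjacency relation of the bubble-sort star graph: `y` is obtained from `x` by
swapping the symbols at positions `i` and `j` (0-indexed), where either `j = i+1`
(an adjacent transposition, i.e. positions `k-1, k` for `k ∈ [2,n]`) or `i = 0`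
(a star transposition, i.e. positions `1, k` for `k ∈ [2,n]`). -/
def BSRel (n : ℕ) (x y : Equiv.Perm (Fin n)) : Prop :=
  ∃ i j : Fin n, (j.val = i.val + 1 ∨ i.val = 0) ∧ i ≠ j ∧ y = x * Equiv.swap i j

/-- The n-dimensional bubble-sort star graph `BS_n` on the permutations of `{1,…,n}`. -/
def BS (n : ℕ) : SimpleGraph (Equiv.Perm (Fin n)) :=
  SimpleGraph.fromRel (BSRel n)

/-- The degree of a vertex, as the cardinality of its neighbour set. -/
noncomputable def deg {V : Type*} (G : SimpleGraph V) (v : V) : ℕ :=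
  (G.neighborSet v).ncard

/-- `G` contains `m` pairwise edge-disjoint paths joining `u` and `v`. -/
def HasEdgeDisjointPaths {V : Type*} (G : SimpleGraph V) (u v : V) (m : ℕ) : Prop :=
  ∃ P : Fin m → G.Path u v, ∀ i j : Fin m, i ≠ j →
    List.Disjoint ((P i : G.Walk u v).edges) ((P j : G.Walk u v).edges)

/-! Let `u u₁ u₂ u₃` be a chordless 4-cycle and delete every edge at `u₁, u₂, u₃` except the
four cycle edges and one further edge `u₁u₁₁`. In a `k`-regular graph this deletes `3k - 7`
edges, keeps every degree at least `min 2 (k - 3)`, and does not touch the edges at `u` or at a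
vertex `v` with no neighbour among `u₁, u₂, u₃`. But a `u`–`v` path has to leave
`{u, u₁, u₂, u₃}` through one of the `k - 2` edges from `u` off the cycle or through `u₁u₁₁`,
so there are at most `k - 1` edge-disjoint ones. `BS_n` is `(2n - 3)`-regular, and
`u = 1`, `u₁ = (1 2)`, `u₂ = (1 2)(3 4)`, `u₃ = (3 4)`, `u₁₁ = (1 2)(1 3)`, `v = (1 3)` is such a
configuration in it. -/

section Graph

variable {V : Type*} {G : SimpleGraph V}

lemma ncard_incidenceSet_eq_deg (x : V) : (G.incidenceSet x).ncard = deg G x := by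
  classical
  rw [deg, ← Nat.card_coe_set_eq, ← Nat.card_coe_set_eq]
  exact Nat.card_congr (G.incidenceSetEquivNeighborSet x)

lemma two_le_deg [Finite V] {w x y : V} (hxy : x ≠ y) (hx : G.Adj w x) (hy : G.Adj w y) :
    2 ≤ deg G w := by
  rw [← Set.ncard_pair hxy]
  exact Set.ncard_le_ncard (Set.pair_subset hx hy)

lemma deg_deleteEdges_of_forall_notMem {F : Set (Sym2 V)} {w : V}
    (h : ∀ y, G.Adj w y → s(w, y) ∉ F) : deg (G.deleteEdges F) w = deg G w := by
  rw [deg, deg]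
  congr 1
  ext y
  exact ⟨fun hy => (deleteEdges_adj.mp hy).1, fun hy => deleteEdges_adj.mpr ⟨hy, h y hy⟩⟩

lemma deg_sub_ncard_le_deg_deleteEdges [Finite V] {F : Set (Sym2 V)} {T : Set V} {w : V}
    (h : ∀ y, s(w, y) ∈ F → y ∈ T) : deg G w - T.ncard ≤ deg (G.deleteEdges F) w :=
  calc deg G w - T.ncard ≤ (G.neighborSet w \ T).ncard := Set.le_ncard_sdiff _ _
    _ ≤ deg (G.deleteEdges F) w :=
      Set.ncard_le_ncard fun y hy => deleteEdges_adj.mpr ⟨hy.1, fun hF => hy.2 (h y hF)⟩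

lemma HasEdgeDisjointPaths.le_ncard_of_boundary_subset {u v : V} {m : ℕ} {S : Set V}
    {C : Set (Sym2 V)} (hC : C.Finite) (hu : u ∈ S) (hv : v ∉ S)
    (hcut : ∀ x y, x ∈ S → y ∉ S → G.Adj x y → s(x, y) ∈ C)
    (h : HasEdgeDisjointPaths G u v m) : m ≤ C.ncard := by
  obtain ⟨P, hP⟩ := h
  have hcross (i : Fin m) : ∃ e ∈ (P i : G.Walk u v).edges, e ∈ C := by
    obtain ⟨d, hd, hS, hnS⟩ := (P i : G.Walk u v).exists_boundary_dart S hu hv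
    exact ⟨d.edge, List.mem_map_of_mem hd, hcut _ _ hS hnS d.adj⟩
  choose e he heC using hcross
  have he_inj : Function.Injective e := fun i j hij => by
    by_contra hne
    exact hP i j hne (he i) (hij ▸ he j)
  calc m = (Set.range e).ncard := by rw [Set.ncard_range_of_injective he_inj, Nat.card_fin]
    _ ≤ C.ncard := Set.ncard_le_ncard (Set.range_subset_iff.mpr heC) hC

end Graph

section Gadget

variable {V : Type*} {G : SimpleGraph V} {u u₁ u₂ u₃ u₁₁ : V}

structure FaultGadget (G : SimpleGraph V) (u u₁ u₂ u₃ u₁₁ : V) : Prop where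
  adj_u_u₁ : G.Adj u u₁
  adj_u₁_u₂ : G.Adj u₁ u₂
  adj_u₂_u₃ : G.Adj u₂ u₃
  adj_u₃_u : G.Adj u₃ u
  u_ne_u₂ : u ≠ u₂
  u₁_ne_u₃ : u₁ ≠ u₃
  not_adj_u_u₂ : ¬G.Adj u u₂
  not_adj_u₁_u₃ : ¬G.Adj u₁ u₃
  adj_u₁_u₁₁ : G.Adj u₁ u₁₁
  u₁₁_ne_u : u₁₁ ≠ u
  u₁₁_ne_u₂ : u₁₁ ≠ u₂

def keptEdges (u u₁ u₂ u₃ u₁₁ : V) : Set (Sym2 V) :=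
  {s(u, u₁), s(u₁, u₂), s(u₂, u₃), s(u₃, u), s(u₁, u₁₁)}

def faultSet (G : SimpleGraph V) (u u₁ u₂ u₃ u₁₁ : V) : Set (Sym2 V) :=
  (G.incidenceSet u₁ ∪ G.incidenceSet u₂ ∪ G.incidenceSet u₃) \ keptEdges u u₁ u₂ u₃ u₁₁

def exitEdges (G : SimpleGraph V) (u u₁ u₃ u₁₁ : V) : Set (Sym2 V) :=
  (fun y => s(u, y)) '' (G.neighborSet u \ {u₁, u₃}) ∪ {s(u₁, u₁₁)}

lemma faultSet_subset_edgeSet : faultSet G u u₁ u₂ u₃ u₁₁ ⊆ G.edgeSet := by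
  rintro e ⟨(he | he) | he, -⟩ <;> exact G.incidenceSet_subset _ he

lemma mk_mem_union_incidenceSet_iff {x y : V} :
    s(x, y) ∈ G.incidenceSet u₁ ∪ G.incidenceSet u₂ ∪ G.incidenceSet u₃ ↔
      G.Adj x y ∧ (x = u₁ ∨ x = u₂ ∨ x = u₃ ∨ y = u₁ ∨ y = u₂ ∨ y = u₃) := by
  simp only [Set.mem_union, mk'_mem_incidenceSet_iff]
  tauto

lemma adj_deleteEdges_faultSet {x y : V} (hxy : G.Adj x y)
    (hK : s(x, y) ∈ keptEdges u u₁ u₂ u₃ u₁₁) :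
    (G.deleteEdges (faultSet G u u₁ u₂ u₃ u₁₁)).Adj x y :=
  deleteEdges_adj.mpr ⟨hxy, fun hF => hF.2 hK⟩

namespace FaultGadget

variable (hg : FaultGadget G u u₁ u₂ u₃ u₁₁)
include hg

lemma ncard_keptEdges : (keptEdges u u₁ u₂ u₃ u₁₁).ncard = 5 := by
  have := hg.adj_u_u₁.ne
  have := hg.adj_u₁_u₂.ne
  have := hg.adj_u₂_u₃.ne
  have := hg.adj_u₃_u.ne
  have := hg.u_ne_u₂
  have := hg.u₁_ne_u₃
  have := hg.u₁₁_ne_u.symm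
  have := hg.u₁₁_ne_u₂.symm
  rw [keptEdges, Set.ncard_insert_of_notMem, Set.ncard_insert_of_notMem,
    Set.ncard_insert_of_notMem, Set.ncard_insert_of_notMem, Set.ncard_singleton] <;>
    simp [*, eq_comm]

lemma keptEdges_subset :
    keptEdges u u₁ u₂ u₃ u₁₁ ⊆ G.incidenceSet u₁ ∪ G.incidenceSet u₂ ∪ G.incidenceSet u₃ := by
  simp only [keptEdges, Set.insert_subset_iff, Set.singleton_subset_iff,
    mk_mem_union_incidenceSet_iff]
  exact ⟨⟨hg.adj_u_u₁, by simp⟩, ⟨hg.adj_u₁_u₂, by simp⟩, ⟨hg.adj_u₂_u₃, by simp⟩,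
    ⟨hg.adj_u₃_u, by simp⟩, ⟨hg.adj_u₁_u₁₁, by simp⟩⟩

lemma ncard_faultSet [Finite V] {k : ℕ} (hreg : ∀ w, deg G w = k) :
    (faultSet G u u₁ u₂ u₃ u₁₁).ncard = 3 * k - 7 := by
  have h12 := Set.ncard_union_add_ncard_inter (G.incidenceSet u₁) (G.incidenceSet u₂)
  rw [G.incidenceSet_inter_incidenceSet_of_adj hg.adj_u₁_u₂] at h12
  have h123 := Set.ncard_union_add_ncard_inter (G.incidenceSet u₁ ∪ G.incidenceSet u₂)
    (G.incidenceSet u₃)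
  rw [Set.union_inter_distrib_right,
    G.incidenceSet_inter_incidenceSet_of_not_adj hg.not_adj_u₁_u₃ hg.u₁_ne_u₃,
    G.incidenceSet_inter_incidenceSet_of_adj hg.adj_u₂_u₃, Set.empty_union] at h123
  simp only [ncard_incidenceSet_eq_deg, hreg, Set.ncard_singleton] at h12 h123
  rw [faultSet, Set.ncard_sdiff hg.keptEdges_subset, hg.ncard_keptEdges]
  omega

lemma deg_deleteEdges_left : deg (G.deleteEdges (faultSet G u u₁ u₂ u₃ u₁₁)) u = deg G u := by
  refine deg_deleteEdges_of_forall_notMem fun y hy ⟨hX, hK⟩ => ?_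
  obtain ⟨-, hu | hu | hu | rfl | rfl | rfl⟩ := mk_mem_union_incidenceSet_iff.mp hX
  · exact hg.adj_u_u₁.ne hu
  · exact hg.u_ne_u₂ hu
  · exact hg.adj_u₃_u.ne hu.symm
  · exact hK (by simp [keptEdges])
  · exact hg.not_adj_u_u₂ hy
  · exact hK (by simp [keptEdges])

lemma deg_deleteEdges_of_not_adj {v : V} (hv₁ : ¬G.Adj u₁ v) (hv₂ : ¬G.Adj u₂ v)
    (hv₃ : ¬G.Adj u₃ v) : deg (G.deleteEdges (faultSet G u u₁ u₂ u₃ u₁₁)) v = deg G v := by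
  refine deg_deleteEdges_of_forall_notMem fun y hy ⟨hX, _⟩ => ?_
  obtain ⟨-, rfl | rfl | rfl | rfl | rfl | rfl⟩ := mk_mem_union_incidenceSet_iff.mp hX
  · exact hv₂ hg.adj_u₁_u₂.symm
  · exact hv₁ hg.adj_u₁_u₂
  · exact hv₂ hg.adj_u₂_u₃
  · exact hv₁ hy.symm
  · exact hv₂ hy.symm
  · exact hv₃ hy.symm

lemma two_le_deg_deleteEdges [Finite V] {k : ℕ} (hreg : ∀ w, deg G w = k) (hk : 5 ≤ k) (w : V) :
    2 ≤ deg (G.deleteEdges (faultSet G u u₁ u₂ u₃ u₁₁)) w := by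
  by_cases hw₁ : w = u₁
  · subst hw₁
    exact two_le_deg hg.u_ne_u₂ (adj_deleteEdges_faultSet hg.adj_u_u₁.symm (by simp [keptEdges]))
      (adj_deleteEdges_faultSet hg.adj_u₁_u₂ (by simp [keptEdges]))
  by_cases hw₂ : w = u₂
  · subst hw₂
    exact two_le_deg hg.u₁_ne_u₃ (adj_deleteEdges_faultSet hg.adj_u₁_u₂.symm (by simp [keptEdges]))
      (adj_deleteEdges_faultSet hg.adj_u₂_u₃ (by simp [keptEdges]))
  by_cases hw₃ : w = u₃
  · subst hw₃
    exact two_le_deg hg.u_ne_u₂.symm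
      (adj_deleteEdges_faultSet hg.adj_u₂_u₃.symm (by simp [keptEdges]))
      (adj_deleteEdges_faultSet hg.adj_u₃_u (by simp [keptEdges]))
  have hT : ∀ y, s(w, y) ∈ faultSet G u u₁ u₂ u₃ u₁₁ → y ∈ ({u₁, u₂, u₃} : Set V) := by
    intro y ⟨hX, _⟩
    obtain ⟨-, h | h | h | h⟩ := mk_mem_union_incidenceSet_iff.mp hX
    · exact absurd h hw₁
    · exact absurd h hw₂
    · exact absurd h hw₃
    · simpa using h
  have h3 : ({u₁, u₂, u₃} : Set V).ncard ≤ 3 :=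
    (Set.ncard_insert_le _ _).trans (Nat.succ_le_succ ((Set.ncard_insert_le _ _).trans (by simp)))
  have := deg_sub_ncard_le_deg_deleteEdges (G := G) hT
  rw [hreg] at this
  omega

lemma notMem_of_not_adj {v : V} (hv₁ : ¬G.Adj u₁ v) (hv₂ : ¬G.Adj u₂ v) (hv₃ : ¬G.Adj u₃ v) :
    v ∉ ({u, u₁, u₂, u₃} : Set V) := by
  rintro (rfl | rfl | rfl | rfl)
  · exact hv₁ hg.adj_u_u₁.symm
  · exact hv₂ hg.adj_u₁_u₂.symm
  · exact hv₁ hg.adj_u₁_u₂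
  · exact hv₂ hg.adj_u₂_u₃

lemma ncard_exitEdges_le [Finite V] : (exitEdges G u u₁ u₃ u₁₁).ncard ≤ deg G u - 1 := by
  have hpair : {u₁, u₃} ⊆ G.neighborSet u := Set.pair_subset hg.adj_u_u₁ hg.adj_u₃_u.symm
  have := two_le_deg hg.u₁_ne_u₃ hg.adj_u_u₁ hg.adj_u₃_u.symm
  calc (exitEdges G u u₁ u₃ u₁₁).ncard
      ≤ ((fun y => s(u, y)) '' (G.neighborSet u \ {u₁, u₃})).ncard + 1 :=
        (Set.ncard_union_le _ _).trans (by rw [Set.ncard_singleton])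
    _ ≤ (G.neighborSet u \ {u₁, u₃}).ncard + 1 := by grw [Set.ncard_image_le]
    _ = deg G u - 1 := by
      rw [Set.ncard_sdiff hpair, Set.ncard_pair hg.u₁_ne_u₃, ← deg]
      omega

lemma mk_mem_exitEdges {x y : V} (hx : x ∈ ({u, u₁, u₂, u₃} : Set V))
    (hy : y ∉ ({u, u₁, u₂, u₃} : Set V))
    (hxy : (G.deleteEdges (faultSet G u u₁ u₂ u₃ u₁₁)).Adj x y) :
    s(x, y) ∈ exitEdges G u u₁ u₃ u₁₁ := by
  obtain ⟨hadj, hF⟩ := deleteEdges_adj.mp hxy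
  rcases hx with rfl | hx
  · exact Or.inl ⟨y, ⟨hadj, fun h => hy (by rcases h with rfl | rfl <;> simp)⟩, rfl⟩
  have hK : s(x, y) ∈ keptEdges u u₁ u₂ u₃ u₁₁ := by
    by_contra hK
    refine hF ⟨mk_mem_union_incidenceSet_iff.mpr ⟨hadj, ?_⟩, hK⟩
    rcases hx with rfl | rfl | rfl <;> simp
  by_cases hexit : s(x, y) = s(u₁, u₁₁)
  · exact Or.inr hexit
  -- every other kept edge joins two vertices of the cycle
  simp only [keptEdges, Set.mem_insert_iff, Set.mem_singleton_iff, hexit, or_false] at hK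
  refine absurd ?_ hy
  rcases hK with h | h | h | h <;>
    rcases Sym2.mem_iff.mp (h ▸ Sym2.mem_mk_right x y) with rfl | rfl <;> simp

lemma le_of_hasEdgeDisjointPaths [Finite V] {v : V} {m : ℕ} (hv : v ∉ ({u, u₁, u₂, u₃} : Set V))
    (h : HasEdgeDisjointPaths (G.deleteEdges (faultSet G u u₁ u₂ u₃ u₁₁)) u v m) :
    m ≤ deg G u - 1 :=
  (h.le_ncard_of_boundary_subset (Set.toFinite _) (by simp) hv
    fun _ _ hx hy hxy => hg.mk_mem_exitEdges hx hy hxy).trans hg.ncard_exitEdges_le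

end FaultGadget

end Gadget

namespace Equiv

lemma eq_and_eq_of_swap_eq_swap_of_lt {α : Type*} [LinearOrder α] {i j k l : α} (hij : i < j)
    (hkl : k < l) (h : swap i j = swap k l) : i = k ∧ j = l := by
  have hi : swap k l i = j := by rw [← h, swap_apply_left]
  rw [swap_apply_def] at hi
  split_ifs at hi with hik hil
  · exact ⟨hik, hi.symm⟩
  · order
  · order

end Equiv

namespace BS

open Equiv

attribute [local simp] swap_apply_of_ne_of_ne

variable {n : ℕ}

def gen (n : ℕ) : Set (Perm (Fin n)) := {t | BSRel n 1 t}

lemma gen_eq_range (m : ℕ) : gen (m + 2) =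
    Set.range (fun k : Fin (m + 1) => swap k.castSucc k.succ) ∪
      Set.range (fun k : Fin m => swap 0 (k.addNat 2)) := by
  ext t
  constructor
  · rintro ⟨i, j, hji | hi, hij, rfl⟩
    · exact Or.inl ⟨⟨i, by omega⟩, by rw [one_mul]; exact congrArg₂ _ rfl (Fin.ext hji.symm)⟩
    · have hj : j.val ≠ 0 := fun hj => hij (Fin.ext (hi.trans hj.symm))
      rcases eq_or_ne j.val 1 with hj1 | hj1
      · exact Or.inl ⟨0, by rw [one_mul]; exact congrArg₂ _ (Fin.ext hi.symm) (Fin.ext hj1.symm)⟩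
      · refine Or.inr ⟨⟨j - 2, by omega⟩, ?_⟩
        rw [one_mul]
        exact congrArg₂ _ (Fin.ext hi.symm) (Fin.ext (by simp; omega))
  · rintro (⟨k, rfl⟩ | ⟨k, rfl⟩)
    · exact ⟨_, _, Or.inl rfl, Fin.castSucc_lt_succ.ne, (one_mul _).symm⟩
    · exact ⟨_, _, Or.inr rfl, by simp [Fin.ext_iff], (one_mul _).symm⟩

lemma ncard_gen (hn : 2 ≤ n) : (gen n).ncard = 2 * n - 3 := by
  obtain ⟨m, rfl⟩ : ∃ m, n = m + 2 := ⟨n - 2, by omega⟩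
  have h0 (k : Fin m) : (0 : Fin (m + 2)) < k.addNat 2 := by simp [Fin.lt_def]
  have hf : Function.Injective fun k : Fin (m + 1) => swap k.castSucc k.succ :=
    fun k l h => Fin.castSucc_injective _
      (eq_and_eq_of_swap_eq_swap_of_lt Fin.castSucc_lt_succ Fin.castSucc_lt_succ h).1
  have hg : Function.Injective fun k : Fin m => swap (0 : Fin (m + 2)) (k.addNat 2) :=
    fun k l h => (Fin.addNat_inj 2).mp (eq_and_eq_of_swap_eq_swap_of_lt (h0 k) (h0 l) h).2
  have hdisj : Disjoint (Set.range fun k : Fin (m + 1) => swap k.castSucc k.succ)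
      (Set.range fun k : Fin m => swap (0 : Fin (m + 2)) (k.addNat 2)) := by
    refine Set.disjoint_range_iff.mpr fun k l h => ?_
    obtain ⟨h1, h2⟩ := eq_and_eq_of_swap_eq_swap_of_lt Fin.castSucc_lt_succ (h0 l) h
    rw [Fin.ext_iff] at h1 h2
    simp only [Fin.val_castSucc, Fin.val_zero, Fin.val_succ, Fin.val_addNat] at h1 h2
    omega
  rw [gen_eq_range, Set.ncard_union_eq hdisj, Set.ncard_range_of_injective hf,
    Set.ncard_range_of_injective hg, Nat.card_fin, Nat.card_fin]
  omega

lemma inv_mem_gen {t : Perm (Fin n)} (ht : t ∈ gen n) : t⁻¹ ∈ gen n := by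
  obtain ⟨i, j, h, hij, rfl⟩ := ht
  exact ⟨i, j, h, hij, by simp⟩

lemma one_notMem_gen : (1 : Perm (Fin n)) ∉ gen n := by
  rintro ⟨i, j, -, hij, h⟩
  exact hij (swap_eq_one_iff.mp (by simpa using h.symm))

lemma adj_iff {x y : Perm (Fin n)} : (BS n).Adj x y ↔ x⁻¹ * y ∈ gen n := by
  have bsRel_iff {x y : Perm (Fin n)} : BSRel n x y ↔ x⁻¹ * y ∈ gen n := by
    simp only [BSRel, gen, Set.mem_ofPred_eq, one_mul, inv_mul_eq_iff_eq_mul]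
  rw [BS, fromRel_adj, bsRel_iff, bsRel_iff]
  refine ⟨fun ⟨_, h⟩ => h.elim id fun h => by simpa using inv_mem_gen h,
    fun h => ⟨?_, Or.inl h⟩⟩
  rintro rfl
  exact one_notMem_gen (by simpa using h)

lemma neighborSet_eq_image (x : Perm (Fin n)) : (BS n).neighborSet x = (x * ·) '' gen n := by
  rw [Set.image_mul_left]
  ext y
  exact adj_iff

lemma deg_eq (hn : 2 ≤ n) (x : Perm (Fin n)) : deg (BS n) x = 2 * n - 3 := by
  rw [deg, neighborSet_eq_image, Set.ncard_image_of_injective _ (mul_right_injective x),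
    ncard_gen hn]

lemma notMem_gen_of_three_moved {t : Perm (Fin n)} {p q r : Fin n} (hpq : p ≠ q)
    (hpr : p ≠ r) (hqr : q ≠ r) (hp : t p ≠ p) (hq : t q ≠ q) (hr : t r ≠ r) : t ∉ gen n := by
  rintro ⟨i, j, -, hij, rfl⟩
  rw [one_mul] at hp hq hr
  have hsub : ({p, q, r} : Finset (Fin n)) ⊆ (swap i j).support := by
    simp [Finset.insert_subset_iff, hp, hq, hr]
  have := Finset.card_le_card hsub
  rw [Finset.card_eq_three.mpr ⟨p, q, r, hpq, hpr, hqr, rfl⟩,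
    Perm.card_support_swap hij] at this
  omega

lemma faultGadget_swaps {p q r s : Fin n} (hpq : p ≠ q) (hpr : p ≠ r) (hps : p ≠ s)
    (hqr : q ≠ r) (hqs : q ≠ s) (hrs : r ≠ s)
    (ha : swap p q ∈ gen n) (hb : swap r s ∈ gen n) (hc : swap p r ∈ gen n) :
    FaultGadget (BS n) 1 (swap p q) (swap p q * swap r s) (swap r s) (swap p q * swap p r) ∧
      ¬(BS n).Adj (swap p q) (swap p r) ∧ ¬(BS n).Adj (swap p q * swap r s) (swap p r) ∧
      ¬(BS n).Adj (swap r s) (swap p r) := by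
  have := hpq.symm
  have := hpr.symm
  have := hps.symm
  have := hqr.symm
  have := hqs.symm
  have := hrs.symm
  have hab : Commute (swap p q) (swap r s) := (Perm.disjoint_swap_swap (by simp [*])).commute
  refine ⟨⟨?_, ?_, ?_, ?_, ?_, ?_, ?_, ?_, ?_, ?_, ?_⟩, ?_, ?_, ?_⟩
  · simpa [adj_iff] using ha
  · simpa [adj_iff] using hb
  · simpa [adj_iff, hab.eq, mul_assoc] using ha
  · simpa [adj_iff] using hb
  · exact ne_of_apply_ne (· p) (by simp [*])
  · exact ne_of_apply_ne (· p) (by simp [*])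
  · simpa [adj_iff] using
      notMem_gen_of_three_moved hpq hpr hqr (by simp [*]) (by simp [*]) (by simp [*])
  · simpa [adj_iff] using
      notMem_gen_of_three_moved hpq hpr hqr (by simp [*]) (by simp [*]) (by simp [*])
  · simpa [adj_iff] using hc
  · exact ne_of_apply_ne (· p) (by simp [*])
  · exact ne_of_apply_ne (· p) (by simp [*])
  · simpa [adj_iff] using
      notMem_gen_of_three_moved hpq hpr hqr (by simp [*]) (by simp [*]) (by simp [*])
  · simpa [adj_iff, mul_assoc] using
      notMem_gen_of_three_moved hpq hpr hqr (by simp [*]) (by simp [*]) (by simp [*])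
  · simpa [adj_iff] using
      notMem_gen_of_three_moved hpr hps hrs (by simp [*]) (by simp [*]) (by simp [*])

lemma exists_faultGadget (hn : 4 ≤ n) : ∃ u u₁ u₂ u₃ u₁₁ v : Perm (Fin n),
    FaultGadget (BS n) u u₁ u₂ u₃ u₁₁ ∧
      ¬(BS n).Adj u₁ v ∧ ¬(BS n).Adj u₂ v ∧ ¬(BS n).Adj u₃ v :=
  ⟨_, _, _, _, _, _, faultGadget_swaps (p := ⟨0, by omega⟩) (q := ⟨1, by omega⟩)
    (r := ⟨2, by omega⟩) (s := ⟨3, by omega⟩) (by simp) (by simp) (by simp) (by simp) (by simp)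
    (by simp) ⟨_, _, Or.inr rfl, by simp, (one_mul _).symm⟩
    ⟨_, _, Or.inl rfl, by simp, (one_mul _).symm⟩ ⟨_, _, Or.inr rfl, by simp, (one_mul _).symm⟩⟩

end BS

/-- The bound `6n - 17` is sharp: for `n ≥ 4` there is an edge set `F` of size `6n - 16`
with `δ(BS_n - F) ≥ 2`, and vertices `u ≠ v`, both of degree `2n - 3` in `BS_n - F`,
joined by at most `2n - 4` edge-disjoint paths in `BS_n - F`. -/
theorem BS_conditional_Menger_bound_sharp (n : ℕ) (hn : 4 ≤ n) :
    ∃ F : Set (Sym2 (Equiv.Perm (Fin n))), F ⊆ (BS n).edgeSet ∧ F.ncard = 6 * n - 16 ∧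
      (∀ w : Equiv.Perm (Fin n), 2 ≤ deg ((BS n).deleteEdges F) w) ∧
      ∃ u v : Equiv.Perm (Fin n), u ≠ v ∧
        deg ((BS n).deleteEdges F) u = 2 * n - 3 ∧
        deg ((BS n).deleteEdges F) v = 2 * n - 3 ∧
        ∀ m : ℕ, HasEdgeDisjointPaths ((BS n).deleteEdges F) u v m → m ≤ 2 * n - 4 := by
  obtain ⟨u, u₁, u₂, u₃, u₁₁, v, hg, hv₁, hv₂, hv₃⟩ := BS.exists_faultGadget hn
  have hreg : ∀ x, deg (BS n) x = 2 * n - 3 := BS.deg_eq (by omega)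
  have hv := hg.notMem_of_not_adj hv₁ hv₂ hv₃
  refine ⟨faultSet (BS n) u u₁ u₂ u₃ u₁₁, faultSet_subset_edgeSet, ?_,
    hg.two_le_deg_deleteEdges hreg (by omega), u, v, fun huv => hv (by simp [huv]), ?_, ?_,
    fun m h => ?_⟩
  · rw [hg.ncard_faultSet hreg]
    omega
  · rw [hg.deg_deleteEdges_left, hreg]
  · rw [hg.deg_deleteEdges_of_not_adj hv₁ hv₂ hv₃, hreg]
  · have := hg.le_of_hasEdgeDisjointPaths hv h
    rw [hreg] at this
    omega
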